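/- Let n be even and d ≥ 1 an integer. Let x : [n] → {−1, 0, +1} be such that at most n/2 coordinates equal +1, at most n/2 coordinates equal −1, and |Σ_{i=1}^{j} x_i| ≤ d/2 for every 1 ≤ j ≤ n. Then there exists y : [n] → {−1, +1} with y_i = x_i whenever x_i ≠ 0, Σ_{i=1}^{n} y_i = 0, and |Σ_{i=1}^{j} y_i| ≤ d for every 1 ≤ j ≤ n. -/
import Mathlib


/-- Claim (i): let `n` be even, `d ≥ 1`, and `x : [n] → {-1,0,+1}` (positions
`0, …, n-1`) with at most `n/2` coordinates `+1`, at most `n/2` coordinates `-1`,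
and every prefix discrepancy at most `d/2` (written `2·|disc| ≤ d`). Then `x`
has a balanced `±1`-completion all of whose prefix discrepancies are at most `d`. -/
theorem stmt_9 (n : ℕ) (hn : Even n) (d : ℕ) (hd : 1 ≤ d) (x : ℕ → ℤ)
    (hx : ∀ i < n, x i = -1 ∨ x i = 0 ∨ x i = 1)
    (hplus : ((Finset.range n).filter fun i => x i = 1).card ≤ n / 2)
    (hminus : ((Finset.range n).filter fun i => x i = -1).card ≤ n / 2)
    (hdisc : ∀ j, 1 ≤ j → j ≤ n → 2 * |∑ i ∈ Finset.range j, x i| ≤ (d : ℤ)) :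
    ∃ y : ℕ → ℤ, (∀ i < n, y i = -1 ∨ y i = 1) ∧
      (∀ i < n, x i ≠ 0 → y i = x i) ∧
      (∑ i ∈ Finset.range n, y i = 0) ∧
      ∀ j, 1 ≤ j → j ≤ n → |∑ i ∈ Finset.range j, y i| ≤ (d : ℤ) := by
  classical
  rcases Nat.eq_zero_or_pos n with rfl | hn0
  · refine ⟨fun _ => 1, ?_, ?_, ?_, ?_⟩
    · intro i hi; omega
    · intro i hi; omega
    · simp
    · intro j hj1 hj0; omega
  set p := ((Finset.range n).filter fun i => x i = 1).card with hp
  set m := ((Finset.range n).filter fun i => x i = -1).card with hm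
  set D : ℤ := ∑ i ∈ Finset.range n, x i with hDdef
  set M : ℕ := D.natAbs with hMdef
  set e : ℤ := if D ≤ 0 then 1 else -1 with hedef
  set u : ℕ → ℤ := fun t => if t ≤ M then (t : ℤ) else (M : ℤ) - ((t - M) % 2 : ℕ)
    with hudef
  set z : ℕ → ℕ := fun j => ((Finset.range j).filter fun i => x i = 0).card with hzdef
  set y : ℕ → ℤ := fun i => if x i = 0 then e * (u (z i + 1) - u (z i)) else x i with hydef
  have he : e = 1 ∨ e = -1 := by
    simp only [hedef]; split_ifs <;> simp
  have hstep : ∀ t, u (t + 1) - u t = 1 ∨ u (t + 1) - u t = -1 := by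
    intro t; simp only [hudef]; split_ifs <;> omega
  have hzstep : ∀ i, z (i + 1) = if x i = 0 then z i + 1 else z i := by
    intro i
    simp only [hzdef, Finset.range_add_one, Finset.filter_insert]
    split_ifs with h
    · rw [Finset.card_insert_of_notMem]
      intro hmem
      exact absurd (Finset.mem_of_mem_filter i hmem) (by simp)
    · rfl
  have hsum : ∀ j, ∑ i ∈ Finset.range j, y i
      = (∑ i ∈ Finset.range j, x i) + e * u (z j) := by
    intro j
    induction j with
    | zero => simp [hzdef, hudef]
    | succ j ih =>
      rw [Finset.sum_range_succ, Finset.sum_range_succ, ih, hzstep j]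
      by_cases h : x j = 0
      · simp only [hydef, h, if_true, if_pos]
        ring
      · simp only [hydef, if_neg h]
        ring
  -- partition of range n
  have hdisj1 : Disjoint ((Finset.range n).filter fun i => x i = 1)
      ((Finset.range n).filter fun i => x i = -1) := by
    rw [Finset.disjoint_left]
    intro i h1 h2
    have := (Finset.mem_filter.mp h1).2
    have := (Finset.mem_filter.mp h2).2
    omega
  have hdisj2 : Disjoint (((Finset.range n).filter fun i => x i = 1) ∪
      ((Finset.range n).filter fun i => x i = -1))
      ((Finset.range n).filter fun i => x i = 0) := by
    rw [Finset.disjoint_left]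
    intro i h1 h2
    have h2' := (Finset.mem_filter.mp h2).2
    rcases Finset.mem_union.mp h1 with h | h <;>
      · have := (Finset.mem_filter.mp h).2; omega
  have hunion : (((Finset.range n).filter fun i => x i = 1) ∪
      ((Finset.range n).filter fun i => x i = -1)) ∪
      ((Finset.range n).filter fun i => x i = 0) = Finset.range n := by
    ext i
    simp only [Finset.mem_union, Finset.mem_filter]
    constructor
    · rintro ((⟨h, _⟩ | ⟨h, _⟩) | ⟨h, _⟩) <;> exact h
    · intro h
      rcases hx i (Finset.mem_range.mp h) with h' | h' | h' <;> tauto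
  have hcard : p + m + z n = n := by
    have := Finset.card_union_of_disjoint hdisj2
    rw [hunion, Finset.card_union_of_disjoint hdisj1] at this
    simp only [Finset.card_range] at this
    have hzn : z n = ((Finset.range n).filter fun i => x i = 0).card := rfl
    rw [hzn]
    omega
  have hD : D = (p : ℤ) - (m : ℤ) := by
    rw [hDdef, ← hunion, Finset.sum_union hdisj2, Finset.sum_union hdisj1]
    have e1 : ∑ i ∈ (Finset.range n).filter (fun i => x i = 1), x i = (p : ℤ) := by
      rw [Finset.sum_congr rfl fun i hi => (Finset.mem_filter.mp hi).2]
      simp [hp]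
    have e2 : ∑ i ∈ (Finset.range n).filter (fun i => x i = -1), x i = -(m : ℤ) := by
      rw [Finset.sum_congr rfl fun i hi => (Finset.mem_filter.mp hi).2]
      simp [hm]
    have e3 : ∑ i ∈ (Finset.range n).filter (fun i => x i = 0), x i = 0 := by
      rw [Finset.sum_congr rfl fun i hi => (Finset.mem_filter.mp hi).2]
      simp
    rw [e1, e2, e3]; ring
  have hMD : D = (M : ℤ) ∨ D = -(M : ℤ) := by
    rw [hMdef]; exact Int.natAbs_eq D
  have h2M : 2 * (M : ℤ) ≤ (d : ℤ) := by
    have := hdisc n (by omega) le_rfl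
    rw [← hDdef] at this
    rwa [Int.abs_eq_natAbs, ← hMdef] at this
  obtain ⟨t, ht⟩ := hn
  have hn2 : n / 2 = t := by omega
  rw [hn2] at hplus hminus
  have hkM : M ≤ z n ∧ (z n - M) % 2 = 0 := by
    rw [hD] at hMD
    omega
  have huk : u (z n) = (M : ℤ) := by
    simp only [hudef]
    split_ifs <;> omega
  have htot : ∑ i ∈ Finset.range n, y i = 0 := by
    rw [hsum n, huk, ← hDdef]
    simp only [hedef]
    split_ifs with h <;> omega
  refine ⟨y, ?_, ?_, htot, ?_⟩
  · intro i hi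
    simp only [hydef]
    by_cases h : x i = 0
    · rw [if_pos h]
      rcases hstep (z i) with h' | h' <;> rcases he with he' | he' <;>
        rw [h', he'] <;> norm_num
    · rw [if_neg h]
      rcases hx i hi with h' | h' | h' <;> tauto
  · intro i hi hne
    simp only [hydef, if_neg hne]
  · intro j hj1 hj2
    rw [hsum j]
    have hxj := hdisc j hj1 hj2
    have hul : -1 ≤ u (z j) ∧ u (z j) ≤ (M : ℤ) := by
      simp only [hudef]; split_ifs <;> omega
    have heabs : |e| = 1 := by
      rcases he with h | h <;> rw [h] <;> norm_num
    have hub : |u (z j)| ≤ (M : ℤ) ∨ |u (z j)| ≤ 1 := by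
      rcases abs_cases (u (z j)) with ⟨h1, _⟩ | ⟨h1, _⟩ <;> omega
    calc |(∑ i ∈ Finset.range j, x i) + e * u (z j)|
        ≤ |∑ i ∈ Finset.range j, x i| + |e * u (z j)| := abs_add_le _ _
      _ = |∑ i ∈ Finset.range j, x i| + |u (z j)| := by rw [abs_mul, heabs, one_mul]
      _ ≤ (d : ℤ) := by omega
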